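/- There exist constants C > 0 and c > 0 such that for all sufficiently large n the following holds for the modified SEMO and modified GSEMO: (i) maximizing OMM, for every choice of the initial individual x⁽⁰⁾ ∈ {0,1}ⁿ, and (ii) maximizing OJZJ_k for any integer k with 1 < k ≤ n/4, for every initial individual that is Pareto-optimal and distinct from 0ⁿ and 1ⁿ, with probability at least 1 − exp(−c√n), after at most C·n² iterations the population contains at least n/2 individuals. -/

import Mathlib

open scoped ENNReal

namespace GSEMOPaper

attribute [local instance] Classical.propDecidable

/-- An individual (bit string) of length `n`. -/
abbrev Individual (n : ℕ) := Fin n → Bool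

/-- `u` weakly dominates `v` (maximization, two objectives). -/
def weaklyDom (u v : ℝ × ℝ) : Prop := v.1 ≤ u.1 ∧ v.2 ≤ u.2

/-- `u` strictly dominates `v`. -/
def strictlyDom (u v : ℝ × ℝ) : Prop := weaklyDom u v ∧ u ≠ v

/-- The Pareto front of a bi-objective function on bit strings. -/
def paretoFront {n : ℕ} (f : Individual n → ℝ × ℝ) : Set (ℝ × ℝ) :=
  {u | ∃ x : Individual n, f x = u ∧ ∀ y : Individual n, ¬ strictlyDom (f y) (f x)}

/-- The objective values of the population `P` cover the Pareto front of `f`. -/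
def covers {n : ℕ} (f : Individual n → ℝ × ℝ) (P : Finset (Individual n)) : Prop :=
  paretoFront f ⊆ f '' (P : Set (Individual n))

/-- A valid (G)SEMO population: distinct members are mutually non-dominated
(in particular they have pairwise distinct objective values). -/
def validPop {n : ℕ} (f : Individual n → ℝ × ℝ) (P : Finset (Individual n)) : Prop :=
  ∀ x ∈ P, ∀ y ∈ P, x ≠ y → ¬ weaklyDom (f x) (f y)

/-- Survival selection of the (G)SEMO: remove all individuals weakly dominated by the
offspring `y`, then insert `y` unless it is strictly dominated by a remaining individual. -/
noncomputable def updatePop {n : ℕ} (f : Individual n → ℝ × ℝ)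
    (P : Finset (Individual n)) (y : Individual n) : Finset (Individual n) :=
  let Q := P.filter fun z => ¬ weaklyDom (f y) (f z)
  if ∃ z ∈ Q, strictlyDom (f z) (f y) then Q else insert y Q

/-- Flip position `i` of `x`. -/
def flipOne {n : ℕ} (x : Individual n) (i : Fin n) : Individual n :=
  Function.update x i (!x i)

/-- One-bit mutation (SEMO): flip exactly one uniformly random position. -/
noncomputable def oneBitMut {n : ℕ} (x : Individual n) : PMF (Individual n) :=
  if h : n = 0 then PMF.pure x
  else
    haveI : Nonempty (Fin n) := ⟨⟨0, Nat.pos_of_ne_zero h⟩⟩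
    (PMF.uniformOfFintype (Fin n)).map (flipOne x)

/-- A vector of `m` independent Bernoulli(`p`) bits. -/
noncomputable def bernoulliVec (p : ℝ≥0∞) (hp : p ≤ 1) : (m : ℕ) → PMF (Fin m → Bool)
  | 0 => PMF.pure fun i => i.elim0
  | m + 1 => (PMF.bernoulli p.toNNReal (by simpa using ENNReal.toNNReal_mono ENNReal.one_ne_top hp)).bind fun b => (bernoulliVec p hp m).map fun v => Fin.cons b v

/-- Standard bit mutation (GSEMO): flip each position independently with probability `1/n`. -/
noncomputable def stdBitMut {n : ℕ} (x : Individual n) : PMF (Individual n) :=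
  if h : n = 0 then PMF.pure x
  else
    (bernoulliVec ((n : ℝ≥0∞))⁻¹
        (ENNReal.inv_le_one.mpr (by exact_mod_cast Nat.one_le_iff_ne_zero.mpr h)) n).map
      fun mask => fun j => if mask j then !x j else x j

/-- One iteration of the (G)SEMO maximizing `f`, with mutation operator `mutOp`:
choose a parent uniformly at random from the population, mutate it, and perform
survival selection. -/
noncomputable def semoStep {n : ℕ} (f : Individual n → ℝ × ℝ)
    (mutOp : Individual n → PMF (Individual n))
    (P : Finset (Individual n)) : PMF (Finset (Individual n)) :=
  if h : P.Nonempty then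
    (PMF.uniformOfFinset P h).bind fun x => (mutOp x).map fun y => updatePop f P y
  else PMF.pure P

/-- One iteration of the modified (G)SEMO: choose `i ∈ {0, …, m}` uniformly at random;
if the population contains no individual `z` with `idx z = i`, nothing happens;
otherwise the (unique) such individual is the parent. -/
noncomputable def modStep {n : ℕ} (f : Individual n → ℝ × ℝ)
    (mutOp : Individual n → PMF (Individual n))
    (idx : Individual n → ℕ) (m : ℕ)
    (P : Finset (Individual n)) : PMF (Finset (Individual n)) :=
  (PMF.uniformOfFintype (Fin (m + 1))).bind fun i =>
    let S := P.filter fun z => idx z = (i : ℕ)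
    if h : S.Nonempty then
      (PMF.uniformOfFinset S h).bind fun x => (mutOp x).map fun y => updatePop f P y
    else PMF.pure P

/-- Distribution of the trajectory (list of states, most recent first) of `t` iterations of
the Markov chain with one-step kernel `step`, started in state `s`. The resulting lists
have length `t + 1` and record the states `P⁽ᵗ⁾, …, P⁽⁰⁾`. -/
noncomputable def run {σ : Type*} [Inhabited σ] (step : σ → PMF σ) (s : σ) : ℕ → PMF (List σ)
  | 0 => PMF.pure [s]
  | t + 1 => (run step s t).bind fun l => (step l.headI).map fun s' => s' :: l

/-- The probability that a sample from `p` lies in the event `E`. -/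
noncomputable def prob {α : Type*} (p : PMF α) (E : Set α) : ℝ≥0∞ := p.toOuterMeasure E

/-- The uniform distribution on `{0,1}ⁿ` used for initialization. -/
noncomputable def uniformInit (n : ℕ) : PMF (Individual n) :=
  PMF.uniformOfFintype (Individual n)

/-- The number of ones of a bit string. -/
def ones {n : ℕ} (x : Individual n) : ℕ :=
  (Finset.univ.filter fun i : Fin n => x i = true).card

/-- The number of zeros of a bit string. -/
def zeros {n : ℕ} (x : Individual n) : ℕ :=
  (Finset.univ.filter fun i : Fin n => x i = false).card

/-- `g₁ x`: the number of ones in the first half (positions `0, …, n/2 - 1`). -/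
def g1 {n : ℕ} (x : Individual n) : ℕ :=
  (Finset.univ.filter fun i : Fin n => (i : ℕ) < n / 2 ∧ x i = true).card

/-- `g₂ x`: the number of ones in the second half (positions `n/2, …, n - 1`). -/
def g2 {n : ℕ} (x : Individual n) : ℕ :=
  (Finset.univ.filter fun i : Fin n => n / 2 ≤ (i : ℕ) ∧ x i = true).card

/-- The COCZ benchmark: `COCZ(x) = (g₁(x) + g₂(x), g₁(x) + n/2 − g₂(x))`. -/
noncomputable def cocz {n : ℕ} (x : Individual n) : ℝ × ℝ :=
  (((g1 x + g2 x : ℕ) : ℝ), (g1 x : ℝ) + (n : ℝ) / 2 - (g2 x : ℝ))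

/-- The OneMinMax benchmark: `OMM(x) = (|x|₁, n − |x|₁)`. -/
noncomputable def omm {n : ℕ} (x : Individual n) : ℝ × ℝ :=
  ((ones x : ℝ), (n : ℝ) - (ones x : ℝ))

/-- The OJZJ benchmark with gap parameter `k`. -/
noncomputable def ojzj (n k : ℕ) (x : Individual n) : ℝ × ℝ :=
  ((if ones x ≤ n - k ∨ x = fun _ => true then ((k + ones x : ℕ) : ℝ)
      else ((n - ones x : ℕ) : ℝ)),
   (if zeros x ≤ n - k ∨ x = fun _ => false then ((k + zeros x : ℕ) : ℝ)
      else ((n - zeros x : ℕ) : ℝ)))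

/-!
Both benchmarks are functions of the number of ones. On the counts `optimalCounts n k`, that is
`{0, n} ∪ [k, n - k]`, their values are pairwise incomparable, and every other count is strictly
dominated by each count in `[k, n - k]`. So once the population contains an individual with a
count in `[k, n - k]`, it holds exactly one individual per present count, never shrinks, and grows
whenever an offspring has a new optimal count.

While fewer than `n / 2` counts are present, some present count `j` has an absent neighbour
`j ± 1` in `[k, n - k]`, in a direction in which at least `n / 8` single-bit flips lead there. The
modified parent selection picks the individual with `j` ones with probability `1 / (n + 1)`, and
each of these flips alone happens with probability at least `1 / (4 n)`, so the population grows
with probability at least `1 / (32 (n + 1))`. Hence the potential `2 ^ (n - |P|)` shrinks in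
expectation by a factor `1 - 1 / (64 (n + 1))` per iteration until `|P| ≥ n / 2`, and after
`256 n²` iterations the failure probability is at most `2 ^ n e ^ (-2 n) ≤ e ^ (-√n)`.
-/

open Finset

section Probability

variable {α β : Type*}

lemma prob_bind (p : PMF α) (f : α → PMF β) (E : Set β) :
    prob (p.bind f) E = ∑' a, p a * prob (f a) E :=
  PMF.toOuterMeasure_bind_apply p f E

lemma prob_map (p : PMF α) (g : α → β) (E : Set β) : prob (p.map g) E = prob p (g ⁻¹' E) :=
  PMF.toOuterMeasure_map_apply g p E

lemma prob_add_prob_compl (p : PMF α) (E : Set α) : prob p E + prob p Eᶜ = 1 := by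
  rw [prob, prob, PMF.toOuterMeasure_apply, PMF.toOuterMeasure_apply, ← ENNReal.tsum_add,
    ← p.tsum_coe]
  exact tsum_congr (Set.indicator_self_add_compl_apply E p)

lemma prob_le_one (p : PMF α) (E : Set α) : prob p E ≤ 1 :=
  prob_add_prob_compl p E ▸ le_self_add

lemma prob_le_prob_of_subset (p : PMF α) {E F : Set α} (h : E ⊆ F) : prob p E ≤ prob p F :=
  p.toOuterMeasure.mono h

lemma sum_le_prob (p : PMF α) {E : Set α} {s : Finset α} (hs : ↑s ⊆ E) :
    ∑ a ∈ s, p a ≤ prob p E := by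
  rw [← PMF.toOuterMeasure_apply_finset]
  exact prob_le_prob_of_subset p hs

lemma le_prob_bind {p : PMF α} {f : α → PMF β} {E : Set β} {q : ℝ≥0∞}
    (h : ∀ a ∈ p.support, q ≤ prob (f a) E) : q ≤ prob (p.bind f) E := by
  rw [prob_bind]
  calc q = ∑' a, p a * q := by rw [ENNReal.tsum_mul_right, p.tsum_coe, one_mul]
    _ ≤ ∑' a, p a * prob (f a) E := ENNReal.tsum_le_tsum fun a => by
        by_cases ha : a ∈ p.support
        · gcongr
          exact h a ha
        · simp [(p.apply_eq_zero_iff a).mpr ha]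

lemma bind_congr_of_mem_support {p : PMF α} {f g : α → PMF β}
    (h : ∀ a ∈ p.support, f a = g a) : p.bind f = p.bind g := by
  ext b
  refine tsum_congr fun a => ?_
  by_cases ha : a ∈ p.support
  · rw [h a ha]
  · simp [(p.apply_eq_zero_iff a).mpr ha]

lemma tsum_mul_le_mul_one_sub {q : PMF α} {A : Set α} {g : α → ℝ≥0∞} {c p : ℝ≥0∞}
    (hc : c ≠ ⊤) (hp : 2 * p ≤ prob q A) (hg : ∀ a ∈ q.support, g a ≤ c)
    (hgA : ∀ a ∈ q.support, a ∈ A → 2 * g a ≤ c) :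
    ∑' a, q a * g a ≤ c * (1 - p) := by
  have hbound : ∀ a, q a * (g a + A.indicator (fun _ => c / 2) a) ≤ q a * c := fun a => by
    by_cases ha : a ∈ q.support
    · gcongr
      by_cases haA : a ∈ A
      · rw [Set.indicator_of_mem haA]
        calc g a + c / 2 ≤ c / 2 + c / 2 := by
              gcongr
              rw [ENNReal.le_div_iff_mul_le (by norm_num) (by norm_num), mul_comm]
              exact hgA a ha haA
          _ = c := ENNReal.add_halves c
      · rw [Set.indicator_of_notMem haA, add_zero]
        exact hg a ha
    · simp [(q.apply_eq_zero_iff a).mpr ha]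
  have key : ∑' a, q a * g a + c * p ≤ c := calc
    ∑' a, q a * g a + c * p ≤ ∑' a, q a * g a + c / 2 * prob q A := by
        refine add_le_add_right ?_ _
        calc c * p = c / 2 * (2 * p) := by
              rw [← mul_assoc, ENNReal.div_mul_cancel (by norm_num) (by norm_num)]
          _ ≤ c / 2 * prob q A := by gcongr
    _ = ∑' a, q a * (g a + A.indicator (fun _ => c / 2) a) := by
        rw [prob, PMF.toOuterMeasure_apply, ← ENNReal.tsum_mul_left, ← ENNReal.tsum_add]
        refine tsum_congr fun a => ?_
        simp only [Set.indicator_apply]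
        split_ifs <;> ring
    _ ≤ ∑' a, q a * c := ENNReal.tsum_le_tsum hbound
    _ = c := by rw [ENNReal.tsum_mul_right, q.tsum_coe, one_mul]
  rw [ENNReal.mul_sub fun _ _ => hc, mul_one]
  exact ENNReal.le_sub_of_add_le_right (ne_top_of_le_ne_top hc (le_add_self.trans key)) key

end Probability

section Run

variable {σ : Type*} [Inhabited σ] (step : σ → PMF σ)

lemma ne_nil_of_mem_support_run {s : σ} :
    ∀ {t : ℕ} {l : List σ}, l ∈ (run step s t).support → l ≠ []
  | 0, l, hl => by simp_all [run]
  | t + 1, l, hl => by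
      simp only [run, PMF.support_bind, PMF.support_map, Set.mem_iUnion, Set.mem_image] at hl
      obtain ⟨_, _, _, _, rfl⟩ := hl
      exact List.cons_ne_nil _ _

lemma run_succ_eq_bind (s : σ) (t : ℕ) :
    run step s (t + 1) = (step s).bind fun s' => (run step s' t).map (· ++ [s]) := by
  induction t generalizing s with
  | zero =>
    simp only [run, PMF.pure_bind, PMF.pure_map]
    rfl
  | succ t ih =>
    rw [run, ih, PMF.bind_bind]
    congr 1
    funext s'
    rw [run, PMF.bind_map, PMF.map_bind]
    refine bind_congr_of_mem_support fun l hl => ?_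
    obtain ⟨a, l, rfl⟩ := List.exists_cons_of_ne_nil (ne_nil_of_mem_support_run step hl)
    simp [PMF.map_comp, Function.comp_def]

variable {step} {valid good : σ → Prop} {size : σ → ℕ} {R : ℕ} {p : ℝ≥0∞}

/-- Tail bound through the potential `2 ^ (R - size s)`, which drops by a factor `1 - p` in
expectation per step as long as no good state has been visited. -/
theorem prob_run_forall_not_good_le
    (hstep : ∀ s, valid s → ∀ s' ∈ (step s).support, valid s' ∧ size s ≤ size s')
    (hgrow : ∀ s, valid s → ¬ good s → 2 * p ≤ prob (step s) {s' | size s < size s'})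
    (hgood : ∀ s, valid s → R ≤ size s → good s) (t : ℕ) :
    ∀ s, valid s →
      prob (run step s t) {l | ∀ Q ∈ l, ¬ good Q} ≤ 2 ^ (R - size s) * (1 - p) ^ t := by
  induction t with
  | zero =>
    intro s _
    rw [pow_zero, mul_one]
    exact (prob_le_one _ _).trans (one_le_pow₀ one_le_two)
  | succ t ih =>
    intro s hs
    rw [run_succ_eq_bind, prob_bind]
    by_cases hs_good : good s
    · have hempty : (· ++ [s]) ⁻¹' {l : List σ | ∀ Q ∈ l, ¬ good Q} = ∅ := by
        ext l
        simp [hs_good]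
      simp [hempty, prob]
    have hlt : size s < R := by
      by_contra h
      exact hs_good (hgood s hs (not_lt.mp h))
    calc ∑' s', step s s' * prob ((run step s' t).map (· ++ [s])) {l | ∀ Q ∈ l, ¬ good Q}
        ≤ ∑' s', step s s' * (2 ^ (R - size s') * (1 - p) ^ t) :=
          ENNReal.tsum_le_tsum fun s' => by
            by_cases hs' : s' ∈ (step s).support
            · gcongr
              rw [prob_map]
              refine le_trans (prob_le_prob_of_subset _ ?_) (ih s' (hstep s hs s' hs').1)
              intro l hl Q hQ
              exact hl Q (List.mem_append_left _ hQ)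
            · simp [((step s).apply_eq_zero_iff s').mpr hs']
      _ = (∑' s', step s s' * 2 ^ (R - size s')) * (1 - p) ^ t := by
          simp_rw [← mul_assoc]
          exact ENNReal.tsum_mul_right
      _ ≤ 2 ^ (R - size s) * (1 - p) * (1 - p) ^ t := by
          gcongr
          refine tsum_mul_le_mul_one_sub (by simp) (hgrow s hs hs_good)
            (fun s' hs' => pow_le_pow_right₀ one_le_two (by have := (hstep s hs s' hs').2; omega))
            (fun s' _ hs' => ?_)
          have hgt : size s < size s' := hs'
          rw [← pow_succ']
          exact pow_le_pow_right₀ one_le_two (by omega)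
      _ = 2 ^ (R - size s) * (1 - p) ^ (t + 1) := by ring

theorem one_sub_le_prob_run_exists_good
    (hstep : ∀ s, valid s → ∀ s' ∈ (step s).support, valid s' ∧ size s ≤ size s')
    (hgrow : ∀ s, valid s → ¬ good s → 2 * p ≤ prob (step s) {s' | size s < size s'})
    (hgood : ∀ s, valid s → R ≤ size s → good s) (t : ℕ) {s : σ} (hs : valid s) :
    1 - 2 ^ (R - size s) * (1 - p) ^ t ≤ prob (run step s t) {l | ∃ Q ∈ l, good Q} := by
  have hcompl : {l : List σ | ∃ Q ∈ l, good Q}ᶜ = {l | ∀ Q ∈ l, ¬ good Q} := by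
    ext l
    simp
  have hsum := prob_add_prob_compl (run step s t) {l | ∃ Q ∈ l, good Q}
  rw [hcompl] at hsum
  rw [tsub_le_iff_right]
  calc 1 = _ := hsum.symm
    _ ≤ _ := add_le_add_right (prob_run_forall_not_good_le hstep hgrow hgood t s hs) _

end Run

section Bits

variable {n : ℕ}

lemma ones_le (x : Individual n) : ones x ≤ n :=
  (card_filter_le _ _).trans (card_fin n).le

lemma zeros_eq (x : Individual n) : zeros x = n - ones x := by
  have h := card_filter_add_card_filter_not (s := univ) (fun i : Fin n => x i = true)
  simp only [Bool.not_eq_true, card_univ, Fintype.card_fin] at h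
  unfold zeros ones
  omega

lemma ones_eq_zero_iff {x : Individual n} : ones x = 0 ↔ x = fun _ => false := by
  simp [ones, funext_iff, filter_eq_empty_iff]

lemma ones_eq_iff_eq_true {x : Individual n} : ones x = n ↔ x = fun _ => true := by
  have hz : zeros x = 0 ↔ x = fun _ => true := by simp [zeros, funext_iff, filter_eq_empty_iff]
  have := ones_le x
  rw [← hz, zeros_eq]
  omega

lemma exists_ones_eq {m : ℕ} (hm : m ≤ n) : ∃ x : Individual n, ones x = m :=
  ⟨fun i => decide ((i : ℕ) < m), by simp [ones, Fin.card_filter_val_lt, hm]⟩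

lemma flipOne_injective (x : Individual n) : Function.Injective (flipOne x) := by
  intro i j h
  by_contra hij
  have := congrFun h i
  simp [flipOne, Function.update_of_ne hij] at this

lemma ones_flipOne_of_false {x : Individual n} {i : Fin n} (h : x i = false) :
    ones (flipOne x i) = ones x + 1 := by
  have : (univ.filter fun j => flipOne x i j = true) =
      insert i (univ.filter fun j => x j = true) := by
    ext j
    by_cases hj : j = i <;> simp [flipOne, hj, h, Function.update_of_ne]
  rw [ones, this, card_insert_of_notMem (by simp [h]), ones]

lemma ones_flipOne_of_true {x : Individual n} {i : Fin n} (h : x i = true) :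
    ones (flipOne x i) + 1 = ones x := by
  have : (univ.filter fun j => flipOne x i j = true) =
      (univ.filter fun j => x j = true).erase i := by
    ext j
    by_cases hj : j = i <;> simp [flipOne, hj, h, Function.update_of_ne]
  rw [ones, this, card_erase_add_one (by simp [h]), ones]

lemma exists_flip_set (x : Individual n) {t : ℕ}
    (ht : (t = ones x + 1 ∧ n ≤ 8 * (n - ones x)) ∨ (t + 1 = ones x ∧ n ≤ 8 * ones x)) :
    ∃ B : Finset (Fin n), n ≤ 8 * #B ∧ ∀ i ∈ B, ones (flipOne x i) = t := by
  rcases ht with ⟨rfl, hB⟩ | ⟨ht, hB⟩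
  · refine ⟨univ.filter fun i => x i = false, ?_,
      fun i hi => ones_flipOne_of_false (mem_filter.mp hi).2⟩
    rwa [← zeros, zeros_eq]
  · refine ⟨univ.filter fun i => x i = true, hB, fun i hi => ?_⟩
    have := ones_flipOne_of_true (mem_filter.mp hi).2
    omega

end Bits

section Mutation

variable {n : ℕ}

lemma inv_le_oneBitMut_flipOne (x : Individual n) (i : Fin n) :
    (n : ℝ≥0∞)⁻¹ ≤ oneBitMut x (flipOne x i) := by
  have hn : n ≠ 0 := i.pos.ne'
  rw [oneBitMut, dif_neg hn, PMF.map_apply]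
  refine le_trans ?_ (ENNReal.le_tsum i)
  simp

lemma prod_le_bernoulliVec (p : ℝ≥0∞) (hp : p ≤ 1) :
    ∀ (m : ℕ) (v : Fin m → Bool), ∏ i, (if v i then p else 1 - p) ≤ bernoulliVec p hp m v
  | 0, v => by
      rw [bernoulliVec, PMF.pure_apply, if_pos (Subsingleton.elim _ _)]
      simp
  | m + 1, v => by
      rw [Fin.prod_univ_succ, bernoulliVec, PMF.bind_apply]
      refine le_trans ?_ (ENNReal.le_tsum (v 0))
      gcongr
      · erw [PMF.ofFintype_apply]
        cases v 0 <;> simp [ENNReal.coe_toNNReal (ne_top_of_le_ne_top ENNReal.one_ne_top hp)]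
      · rw [PMF.map_apply]
        refine le_trans ?_ (ENNReal.le_tsum (Fin.tail v))
        rw [if_pos (Fin.cons_self_tail v).symm]
        exact prod_le_bernoulliVec p hp m (Fin.tail v)

lemma inv_four_le_one_sub_inv_pow (hn : n ≠ 0) :
    (4 : ℝ≥0∞)⁻¹ ≤ (1 - (n : ℝ≥0∞)⁻¹) ^ (n - 1) := by
  obtain ⟨m, rfl⟩ := Nat.exists_eq_succ_of_ne_zero hn
  rcases Nat.eq_zero_or_pos m with rfl | hm
  · simp
  have hreal : (4 : ℝ)⁻¹ ≤ (1 - ((m + 1 : ℕ) : ℝ)⁻¹) ^ m := by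
    have hbase : 1 - ((m + 1 : ℕ) : ℝ)⁻¹ = (1 + (m : ℝ)⁻¹)⁻¹ := by
      push_cast
      field_simp
      ring
    rw [hbase, inv_pow]
    gcongr
    exact Real.one_add_inv_pow_le_exp.trans (Real.exp_one_lt_d9.trans (by norm_num)).le
  calc (4 : ℝ≥0∞)⁻¹ = ENNReal.ofReal (4 : ℝ)⁻¹ := by
        rw [ENNReal.ofReal_inv_of_pos (by norm_num)]; norm_num
    _ ≤ ENNReal.ofReal ((1 - ((m + 1 : ℕ) : ℝ)⁻¹) ^ m) := ENNReal.ofReal_le_ofReal hreal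
    _ = (1 - ((m + 1 : ℕ) : ℝ≥0∞)⁻¹) ^ (m + 1 - 1) := by
        rw [ENNReal.ofReal_pow (by simp [inv_le_one_of_one_le₀]),
          ENNReal.ofReal_sub _ (by positivity), ENNReal.ofReal_one,
          ENNReal.ofReal_inv_of_pos (by positivity), ENNReal.ofReal_natCast, Nat.add_sub_cancel]

/-- Flipping exactly bit `i` has probability `n⁻¹ (1 - n⁻¹) ^ (n - 1) ≥ (4 n)⁻¹`. -/
lemma inv_le_stdBitMut_flipOne (x : Individual n) (i : Fin n) :
    ((4 : ℝ≥0∞) * n)⁻¹ ≤ stdBitMut x (flipOne x i) := by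
  have hn : n ≠ 0 := i.pos.ne'
  rw [stdBitMut, dif_neg hn, PMF.map_apply]
  let mask : Fin n → Bool := fun j => decide (j = i)
  have hmask : flipOne x i = fun j => if mask j then !x j else x j := by
    funext j
    by_cases hj : j = i <;> simp [flipOne, mask, hj, Function.update_of_ne]
  refine le_trans ?_ (ENNReal.le_tsum mask)
  rw [if_pos hmask]
  refine le_trans ?_ (prod_le_bernoulliVec _ _ n mask)
  rw [← mul_prod_erase univ _ (mem_univ i),
    prod_congr rfl fun j hj => if_neg (by simpa [mask] using (mem_erase.mp hj).1), prod_const,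
    card_erase_of_mem (mem_univ i), card_univ, Fintype.card_fin, if_pos (by simp [mask]),
    ENNReal.mul_inv (by simp) (by simp), mul_comm (4 : ℝ≥0∞)⁻¹]
  gcongr
  exact inv_four_le_one_sub_inv_pow hn

lemma inv_le_mutOp_flipOne {mutOp : Individual n → PMF (Individual n)}
    (hmut : mutOp = oneBitMut ∨ mutOp = stdBitMut) (x : Individual n) (i : Fin n) :
    ((4 : ℝ≥0∞) * n)⁻¹ ≤ mutOp x (flipOne x i) := by
  rcases hmut with rfl | rfl
  · exact le_trans (ENNReal.inv_le_inv.mpr (le_mul_of_one_le_left' (by norm_num)))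
      (inv_le_oneBitMut_flipOne x i)
  · exact inv_le_stdBitMut_flipOne x i

lemma inv_le_prob_of_flipOne_mem {mutOp : Individual n → PMF (Individual n)}
    (hmut : ∀ x i, ((4 : ℝ≥0∞) * n)⁻¹ ≤ mutOp x (flipOne x i)) (hn : n ≠ 0)
    (x : Individual n) {B : Finset (Fin n)} (hB : n ≤ 8 * #B) {E : Set (Individual n)}
    (hE : ∀ i ∈ B, flipOne x i ∈ E) : (32 : ℝ≥0∞)⁻¹ ≤ prob (mutOp x) E := by
  have hsum : ∑ i ∈ B, mutOp x (flipOne x i) ≤ prob (mutOp x) E := by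
    rw [← sum_image fun i _ j _ h => flipOne_injective x h]
    exact sum_le_prob _ fun y hy => by
      obtain ⟨i, hi, rfl⟩ := mem_image.mp (mem_coe.mp hy)
      exact hE i hi
  refine le_trans ?_ ((sum_le_sum fun i _ => hmut x i).trans hsum)
  rw [sum_const, nsmul_eq_mul, ← div_eq_mul_inv,
    ENNReal.le_div_iff_mul_le (by simp [hn]) (by simp)]
  calc 32⁻¹ * (4 * n) ≤ (32 : ℝ≥0∞)⁻¹ * (4 * (8 * #B)) := by gcongr; exact_mod_cast hB
    _ = 32⁻¹ * 32 * #B := by ring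
    _ = #B := by rw [ENNReal.inv_mul_cancel (by norm_num) (by norm_num), one_mul]

end Mutation

section Population

lemma weaklyDom_iff {u v : ℝ × ℝ} : weaklyDom u v ↔ v ≤ u := Iff.rfl

lemma strictlyDom_iff {u v : ℝ × ℝ} : strictlyDom u v ↔ v < u := by
  rw [strictlyDom, weaklyDom_iff, lt_iff_le_and_ne, ne_comm]

variable {n k : ℕ} {val : ℕ → ℝ × ℝ}

/-- The numbers of ones of the Pareto-optimal individuals of `OJZJ_k`; for `k = 0`, all of
`[0, n]`, which are those of `OMM`. -/
def optimalCounts (n k : ℕ) : Finset ℕ := insert 0 (insert n (Icc k (n - k)))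

lemma mem_optimalCounts {a : ℕ} :
    a ∈ optimalCounts n k ↔ a = 0 ∨ a = n ∨ a ∈ Icc k (n - k) := by
  simp [optimalCounts]

structure IsGapFront (n k : ℕ) (val : ℕ → ℝ × ℝ) : Prop where
  eq_of_le : ∀ a ∈ optimalCounts n k, ∀ b ∈ optimalCounts n k, val a ≤ val b → a = b
  lt_of_notMem : ∀ b ≤ n, b ∉ optimalCounts n k → ∀ a ∈ Icc k (n - k), val b < val a

lemma IsGapFront.not_le (hval : IsGapFront n k val) {a b w : ℕ} (ha : a ∈ optimalCounts n k)
    (hb : b ≤ n) (hbF : b ∉ optimalCounts n k) (hw : w ∈ Icc k (n - k)) :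
    ¬ val a ≤ val b := by
  intro hab
  have hbw := hval.lt_of_notMem b hb hbF w hw
  have haw := hval.eq_of_le a ha w (by simp [mem_optimalCounts, hw]) (hab.trans hbw.le)
  exact absurd (haw ▸ hab) (not_le_of_gt hbw)

structure PopInvariant (n k : ℕ) (P : Finset (Individual n)) : Prop where
  injOn_ones : Set.InjOn ones (P : Set (Individual n))
  ones_mem : ∀ x ∈ P, ones x ∈ optimalCounts n k
  exists_mid : ∃ x ∈ P, ones x ∈ Icc k (n - k)

lemma PopInvariant.card_eq {P : Finset (Individual n)} (hP : PopInvariant n k P) :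
    #P = #(P.image ones) :=
  (card_image_of_injOn hP.injOn_ones).symm

lemma PopInvariant.singleton {x : Individual n} (hx : ones x ∈ Icc k (n - k)) :
    PopInvariant n k {x} where
  injOn_ones := by simp
  ones_mem y hy := by simp_all [mem_optimalCounts]
  exists_mid := ⟨x, mem_singleton_self x, hx⟩

lemma image_ones_insert_filter (P : Finset (Individual n)) (y : Individual n) :
    (insert y (P.filter fun z => ones z ≠ ones y)).image ones =
      insert (ones y) (P.image ones) := by
  ext a
  simp only [image_insert, mem_insert, mem_image, mem_filter]
  constructor
  · rintro (h | ⟨z, ⟨hz, -⟩, rfl⟩)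
    exacts [Or.inl h, Or.inr ⟨z, hz, rfl⟩]
  · rintro (h | ⟨z, hz, rfl⟩)
    · exact Or.inl h
    · by_cases hzy : ones z = ones y
      exacts [Or.inl hzy, Or.inr ⟨z, ⟨hz, hzy⟩, rfl⟩]

lemma PopInvariant.insert_filter {P : Finset (Individual n)} (hP : PopInvariant n k P)
    {y : Individual n} (hy : ones y ∈ optimalCounts n k) :
    PopInvariant n k (insert y (P.filter fun z => ones z ≠ ones y)) where
  injOn_ones a ha b hb hab := by
    rw [mem_coe, mem_insert, mem_filter] at ha hb
    rcases ha with rfl | ⟨ha, hay⟩ <;> rcases hb with rfl | ⟨hb, hby⟩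
    · rfl
    · exact absurd hab.symm hby
    · exact absurd hab hay
    · exact hP.injOn_ones ha hb hab
  ones_mem z hz := by
    rcases mem_insert.mp hz with rfl | hz
    exacts [hy, hP.ones_mem z (mem_filter.mp hz).1]
  exists_mid := by
    obtain ⟨w, hwP, hw⟩ := hP.exists_mid
    by_cases hwy : ones w = ones y
    · exact ⟨y, mem_insert_self _ _, hwy ▸ hw⟩
    · exact ⟨w, mem_insert_of_mem (mem_filter.mpr ⟨hwP, hwy⟩), hw⟩

lemma updatePop_of_notMem (hval : IsGapFront n k val) {P : Finset (Individual n)}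
    (hP : PopInvariant n k P) {y : Individual n} (hy : ones y ∉ optimalCounts n k) :
    updatePop (val ∘ ones) P y = P := by
  obtain ⟨w, hwP, hw⟩ := hP.exists_mid
  have hQ : P.filter (fun z => ¬ weaklyDom (val (ones y)) (val (ones z))) = P :=
    filter_true_of_mem fun z hz => hval.not_le (hP.ones_mem z hz) (ones_le y) hy hw
  simp only [updatePop, Function.comp_apply, hQ]
  rw [if_pos ⟨w, hwP, strictlyDom_iff.mpr (hval.lt_of_notMem _ (ones_le y) hy _ hw)⟩]

lemma updatePop_of_mem (hval : IsGapFront n k val) {P : Finset (Individual n)}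
    (hP : PopInvariant n k P) {y : Individual n} (hy : ones y ∈ optimalCounts n k) :
    updatePop (val ∘ ones) P y = insert y (P.filter fun z => ones z ≠ ones y) := by
  have hle : ∀ z ∈ P, val (ones z) ≤ val (ones y) ↔ ones z = ones y := fun z hz =>
    ⟨hval.eq_of_le _ (hP.ones_mem z hz) _ hy, fun h => h ▸ le_rfl⟩
  have hQ : P.filter (fun z => ¬ weaklyDom (val (ones y)) (val (ones z))) =
      P.filter fun z => ones z ≠ ones y :=
    filter_congr fun z hz => not_congr (hle z hz)
  simp only [updatePop, Function.comp_apply, hQ]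
  refine if_neg ?_
  rintro ⟨z, hz, hzy⟩
  obtain ⟨hzP, hne⟩ := mem_filter.mp hz
  exact hne (hval.eq_of_le _ hy _ (hP.ones_mem z hzP) (strictlyDom_iff.mp hzy).le).symm

lemma PopInvariant.updatePop (hval : IsGapFront n k val) {P : Finset (Individual n)}
    (hP : PopInvariant n k P) (y : Individual n) :
    PopInvariant n k (updatePop (val ∘ ones) P y) ∧ #P ≤ #(updatePop (val ∘ ones) P y) := by
  by_cases hy : ones y ∈ optimalCounts n k
  · rw [updatePop_of_mem hval hP hy]
    refine ⟨hP.insert_filter hy, ?_⟩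
    rw [(hP.insert_filter hy).card_eq, image_ones_insert_filter, hP.card_eq]
    exact card_le_card (subset_insert _ _)
  · rw [updatePop_of_notMem hval hP hy]
    exact ⟨hP, le_rfl⟩

lemma card_lt_card_updatePop (hval : IsGapFront n k val) {P : Finset (Individual n)}
    (hP : PopInvariant n k P) {y : Individual n} (hy : ones y ∈ optimalCounts n k)
    (hnew : ones y ∉ P.image ones) : #P < #(updatePop (val ∘ ones) P y) := by
  rw [updatePop_of_mem hval hP hy, (hP.insert_filter hy).card_eq, image_ones_insert_filter,
    card_insert_of_notMem hnew, hP.card_eq]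
  exact Nat.lt_succ_self _

lemma mem_support_modStep {f : Individual n → ℝ × ℝ}
    {mutOp : Individual n → PMF (Individual n)} {idx : Individual n → ℕ} {m : ℕ}
    {P P' : Finset (Individual n)}
    (h : P' ∈ (modStep f mutOp idx m P).support) : P' = P ∨ ∃ y, P' = updatePop f P y := by
  simp only [modStep, PMF.support_bind, Set.mem_iUnion] at h
  obtain ⟨i, -, h⟩ := h
  split_ifs at h
  · simp only [PMF.support_bind, PMF.support_map, Set.mem_iUnion, Set.mem_image] at h
    obtain ⟨-, -, y, -, rfl⟩ := h
    exact Or.inr ⟨y, rfl⟩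
  · exact Or.inl (by simpa using h)

lemma le_prob_modStep {f : Individual n → ℝ × ℝ}
    {mutOp : Individual n → PMF (Individual n)} {idx : Individual n → ℕ} {m : ℕ}
    {P : Finset (Individual n)} {E : Set (Finset (Individual n))} {q : ℝ≥0∞} {i : ℕ}
    (hi : i ≤ m) (hne : ∃ x ∈ P, idx x = i)
    (h : ∀ x ∈ P, idx x = i → q ≤ prob (mutOp x) (updatePop f P ⁻¹' E)) :
    (m + 1 : ℝ≥0∞)⁻¹ * q ≤ prob (modStep f mutOp idx m P) E := by
  have hS : (P.filter fun z => idx z = i).Nonempty := by simpa [Finset.Nonempty] using hne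
  rw [modStep, prob_bind]
  refine le_trans ?_ (ENNReal.le_tsum (⟨i, Nat.lt_succ_of_le hi⟩ : Fin (m + 1)))
  simp only [PMF.uniformOfFintype_apply, Fintype.card_fin, Nat.cast_add, Nat.cast_one]
  gcongr
  rw [dif_pos hS]
  refine le_prob_bind fun x hx => ?_
  rw [PMF.mem_support_uniformOfFinset_iff, mem_filter] at hx
  rw [prob_map]
  exact h x hx.1 hx.2

end Population

section Growth

lemma exists_mem_succ_notMem {V : Finset ℕ} {w m : ℕ} (hw : w ∈ V) (hm : m ∉ V)
    (hwm : w ≤ m) :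
    ∃ j ∈ V, w ≤ j ∧ j < m ∧ j + 1 ∉ V := by
  induction h : m - w generalizing w with
  | zero => exact absurd (show w = m by omega) (by rintro rfl; exact hm hw)
  | succ d ih =>
    by_cases hw1 : w + 1 ∈ V
    · have hne : w ≠ m := by rintro rfl; exact hm hw
      obtain ⟨j, hj, hwj, hjm, hj1⟩ := ih hw1 (by omega) (by omega)
      exact ⟨j, hj, by omega, hjm, hj1⟩
    · exact ⟨w, hw, le_rfl, by omega, hw1⟩

lemma exists_mem_pred_notMem {V : Finset ℕ} {w m : ℕ} (hw : w ∈ V) (hm : m ∉ V)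
    (hmw : m ≤ w) :
    ∃ j ∈ V, m < j ∧ j ≤ w ∧ j - 1 ∉ V := by
  induction h : w - m generalizing w with
  | zero => exact absurd (show w = m by omega) (by rintro rfl; exact hm hw)
  | succ d ih =>
    by_cases hw1 : w - 1 ∈ V
    · have hne : w ≠ m := by rintro rfl; exact hm hw
      obtain ⟨j, hj, hmj, hjw, hj1⟩ := ih hw1 (by omega) (by omega)
      exact ⟨j, hj, hmj, by omega, hj1⟩
    · exact ⟨w, hw, by omega, le_rfl, hw1⟩

/-- The range `[max k (n / 8), min (n - k) (7 n / 8)]` is too large to be covered by `V`; walk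
from `w` towards a count of it missing from `V`. -/
lemma exists_absent_neighbour {n k : ℕ} (hn : 16 ≤ n) (hk : 4 * k ≤ n) {V : Finset ℕ}
    {w : ℕ} (hwV : w ∈ V) (hw : w ∈ Icc k (n - k)) (hV : 2 * #V < n) :
    ∃ j ∈ V, ∃ t ∈ Icc k (n - k), t ∉ V ∧
      ((t = j + 1 ∧ n ≤ 8 * (n - j)) ∨ (t + 1 = j ∧ n ≤ 8 * j)) := by
  obtain ⟨m, hmI, hmV⟩ :
      ∃ m ∈ Icc (max k ((n + 7) / 8)) (min (n - k) (7 * n / 8)), m ∉ V := by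
    by_contra! h
    have := card_le_card h
    rw [Nat.card_Icc] at this
    omega
  rw [mem_Icc, max_le_iff, le_min_iff] at hmI
  rw [mem_Icc] at hw
  rcases le_total w m with hwm | hmw
  · obtain ⟨j, hj, hwj, hjm, hj1⟩ := exists_mem_succ_notMem hwV hmV hwm
    exact ⟨j, hj, j + 1, mem_Icc.mpr ⟨by omega, by omega⟩, hj1, Or.inl ⟨rfl, by omega⟩⟩
  · obtain ⟨j, hj, hmj, hjw, hj1⟩ := exists_mem_pred_notMem hwV hmV hmw
    exact ⟨j, hj, j - 1, mem_Icc.mpr ⟨by omega, by omega⟩, hj1,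
      Or.inr ⟨by omega, by omega⟩⟩

variable {n k : ℕ} {val : ℕ → ℝ × ℝ} {mutOp : Individual n → PMF (Individual n)}

theorem inv_le_prob_modStep_card_lt (hn : 16 ≤ n) (hk : 4 * k ≤ n)
    (hval : IsGapFront n k val)
    (hmut : ∀ x i, ((4 : ℝ≥0∞) * n)⁻¹ ≤ mutOp x (flipOne x i))
    {P : Finset (Individual n)} (hP : PopInvariant n k P) (hcard : 2 * #P < n) :
    ((n + 1 : ℝ≥0∞) * 32)⁻¹ ≤
      prob (modStep (val ∘ ones) mutOp ones n P) {P' | #P < #P'} := by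
  obtain ⟨w, hwP, hw⟩ := hP.exists_mid
  obtain ⟨j, hjV, t, ht, htV, hdir⟩ := exists_absent_neighbour hn hk
    (mem_image_of_mem ones hwP) hw (hP.card_eq ▸ hcard)
  obtain ⟨x₀, hx₀P, rfl⟩ := mem_image.mp hjV
  rw [ENNReal.mul_inv (by simp) (by simp)]
  refine le_prob_modStep (ones_le x₀) ⟨x₀, hx₀P, rfl⟩ fun x hxP hx => ?_
  rw [← hx] at hdir
  obtain ⟨B, hB, hflip⟩ := exists_flip_set x hdir
  refine inv_le_prob_of_flipOne_mem hmut (by omega) x hB fun i hi => ?_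
  have hflip_t := hflip i hi
  exact card_lt_card_updatePop hval hP (hflip_t ▸ mem_optimalCounts.mpr (Or.inr (Or.inr ht)))
    (hflip_t ▸ htV)

end Growth

section Assembly

lemma two_pow_mul_one_sub_pow_le_exp {n : ℕ} (hn : 1 ≤ n) :
    (2 : ℝ) ^ (n - 1) * (1 - (((n : ℝ) + 1) * 64)⁻¹) ^ (256 * n ^ 2) ≤
      Real.exp (-Real.sqrt n) := by
  set M : ℕ := (n + 1) * 64 with hM
  have hMR : ((n : ℝ) + 1) * 64 = M := by push_cast [hM]; ring
  have hM1 : (1 : ℝ) ≤ M := by exact_mod_cast (by omega : 1 ≤ M)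
  have hbase_nonneg : 0 ≤ 1 - (M : ℝ)⁻¹ := sub_nonneg.mpr (inv_le_one_of_one_le₀ hM1)
  have hbase : (1 - (M : ℝ)⁻¹) ^ M ≤ Real.exp (-1) := by
    simpa [one_div] using Real.one_sub_div_pow_le_exp_neg (n := M) (t := 1) hM1
  have hexp : (1 - (M : ℝ)⁻¹) ^ (256 * n ^ 2) ≤ Real.exp (-(2 * n)) := calc
    (1 - (M : ℝ)⁻¹) ^ (256 * n ^ 2) ≤ (1 - (M : ℝ)⁻¹) ^ (M * (2 * n)) :=
        pow_le_pow_of_le_one hbase_nonneg (by simp)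
          (by rw [hM]; nlinarith)
    _ ≤ Real.exp (-1) ^ (2 * n) := by
        rw [pow_mul]
        exact pow_le_pow_left₀ (pow_nonneg hbase_nonneg _) hbase _
    _ = Real.exp (-(2 * n)) := by rw [← Real.exp_nat_mul]; push_cast; ring_nf
  have htwo : (2 : ℝ) ^ (n - 1) ≤ Real.exp n := calc
    (2 : ℝ) ^ (n - 1) ≤ 2 ^ n := pow_le_pow_right₀ one_le_two (Nat.sub_le n 1)
    _ ≤ Real.exp 1 ^ n := by
        gcongr
        linarith [Real.add_one_le_exp (1 : ℝ)]
    _ = Real.exp n := by rw [← Real.exp_nat_mul, mul_one]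
  have hsqrt : Real.sqrt n ≤ n := Real.sqrt_le_self_iff.mpr (Or.inr (by exact_mod_cast hn))
  calc (2 : ℝ) ^ (n - 1) * (1 - (((n : ℝ) + 1) * 64)⁻¹) ^ (256 * n ^ 2)
      ≤ Real.exp n * Real.exp (-(2 * n)) := by
        rw [hMR]
        exact mul_le_mul htwo hexp (pow_nonneg hbase_nonneg _)
          (Real.exp_nonneg _)
    _ ≤ Real.exp (-Real.sqrt n) := by
        rw [← Real.exp_add]
        exact Real.exp_le_exp.mpr (by linarith)

lemma two_pow_mul_one_sub_pow_le_ofReal_exp {n : ℕ} (hn : 1 ≤ n) :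
    (2 : ℝ≥0∞) ^ (n - 1) * (1 - ((n + 1 : ℝ≥0∞) * 64)⁻¹) ^ (256 * n ^ 2) ≤
      ENNReal.ofReal (Real.exp (-Real.sqrt n)) := by
  have hle : (((n : ℝ) + 1) * 64)⁻¹ ≤ 1 := inv_le_one_of_one_le₀ (by nlinarith)
  calc (2 : ℝ≥0∞) ^ (n - 1) * (1 - ((n + 1 : ℝ≥0∞) * 64)⁻¹) ^ (256 * n ^ 2)
      = ENNReal.ofReal
          ((2 : ℝ) ^ (n - 1) * (1 - (((n : ℝ) + 1) * 64)⁻¹) ^ (256 * n ^ 2)) := by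
        rw [ENNReal.ofReal_mul (by positivity), ENNReal.ofReal_pow zero_le_two,
          ENNReal.ofReal_pow (sub_nonneg.mpr hle), ENNReal.ofReal_sub _ (by positivity),
          ENNReal.ofReal_inv_of_pos (by positivity), ENNReal.ofReal_mul (by positivity),
          ENNReal.ofReal_add (by positivity) zero_le_one, ENNReal.ofReal_natCast]
        norm_num
    _ ≤ ENNReal.ofReal (Real.exp (-Real.sqrt n)) :=
        ENNReal.ofReal_le_ofReal (two_pow_mul_one_sub_pow_le_exp hn)

variable {n k : ℕ} {val : ℕ → ℝ × ℝ} {mutOp : Individual n → PMF (Individual n)}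

theorem one_sub_exp_le_prob_run_modStep (hn : 16 ≤ n) (hk : 4 * k ≤ n)
    (hval : IsGapFront n k val)
    (hmut : ∀ x i, ((4 : ℝ≥0∞) * n)⁻¹ ≤ mutOp x (flipOne x i))
    {x₀ : Individual n} (hx₀ : ones x₀ ∈ Icc k (n - k)) :
    1 - ENNReal.ofReal (Real.exp (-Real.sqrt n)) ≤
      prob (run (modStep (val ∘ ones) mutOp ones n) {x₀} ⌊(256 : ℝ) * n ^ 2⌋₊)
        {l | ∃ Q ∈ l, (n : ℝ) / 2 ≤ #Q} := by
  have hrun := one_sub_le_prob_run_exists_good (valid := PopInvariant n k) (size := card) (R := n)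
    (good := fun Q => (n : ℝ) / 2 ≤ #Q) (p := ((n + 1 : ℝ≥0∞) * 64)⁻¹)
    (fun P hP P' hP' => by
      rcases mem_support_modStep hP' with rfl | ⟨y, rfl⟩
      exacts [⟨hP, le_rfl⟩, hP.updatePop hval y])
    (fun P hP hsmall => by
      have hhalf : 2 * ((n + 1 : ℝ≥0∞) * 64)⁻¹ = ((n + 1 : ℝ≥0∞) * 32)⁻¹ := by
        rw [show (n + 1 : ℝ≥0∞) * 64 = 2 * ((n + 1) * 32) by ring,
          ENNReal.mul_inv (by simp) (by simp), ← mul_assoc,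
          ENNReal.mul_inv_cancel (by simp) (by simp), one_mul]
      rw [hhalf]
      refine inv_le_prob_modStep_card_lt hn hk hval hmut hP ?_
      have : (#P : ℝ) < n / 2 := not_le.mp hsmall
      exact_mod_cast (by linarith : (2 * #P : ℝ) < n))
    (fun P _ hlarge => by
      have : (n : ℝ) ≤ #P := by exact_mod_cast hlarge
      show (n : ℝ) / 2 ≤ #P
      linarith [(Nat.cast_nonneg n : (0 : ℝ) ≤ n)])
    ⌊(256 : ℝ) * n ^ 2⌋₊ (PopInvariant.singleton hx₀)
  refine le_trans (tsub_le_tsub_left ?_ 1) hrun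
  have hT : ⌊(256 : ℝ) * n ^ 2⌋₊ = 256 * n ^ 2 := by
    exact_mod_cast Nat.floor_natCast (256 * n ^ 2)
  rw [hT, card_singleton]
  exact two_pow_mul_one_sub_pow_le_ofReal_exp (by omega)

end Assembly

section Benchmarks

variable {n k : ℕ}

lemma isGapFront_omm (n : ℕ) : IsGapFront n 0 fun o => ((o : ℝ), (n : ℝ) - o) where
  eq_of_le a _ b _ h := by
    obtain ⟨h₁, h₂⟩ := Prod.mk_le_mk.mp h
    exact_mod_cast le_antisymm h₁ (by linarith)
  lt_of_notMem b hb hbF :=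
    absurd (mem_optimalCounts.mpr (Or.inr (Or.inr (by simpa using hb)))) hbF

noncomputable def ojzjVal (n k o : ℕ) : ℝ × ℝ :=
  ((if o ≤ n - k ∨ o = n then ((k + o : ℕ) : ℝ) else ((n - o : ℕ) : ℝ)),
   (if n - o ≤ n - k ∨ o = 0 then ((k + (n - o) : ℕ) : ℝ) else ((n - (n - o) : ℕ) : ℝ)))

lemma ojzj_eq_comp : ojzj n k = ojzjVal n k ∘ ones := by
  funext x
  simp only [ojzj, ojzjVal, Function.comp_apply, zeros_eq, ← ones_eq_iff_eq_true,
    ← ones_eq_zero_iff]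

lemma isGapFront_ojzjVal (hk : 1 ≤ k) (hkn : 2 * k ≤ n) : IsGapFront n k (ojzjVal n k) where
  eq_of_le a ha b hb h := by
    simp only [ojzjVal, Prod.mk_le_mk, ← Nat.cast_ite, Nat.cast_le] at h
    rw [mem_optimalCounts, mem_Icc] at ha hb
    split_ifs at h <;> omega
  lt_of_notMem b hb hbF a ha := by
    rw [mem_optimalCounts, mem_Icc] at hbF
    rw [mem_Icc] at ha
    rw [lt_iff_le_and_ne]
    simp only [ojzjVal, Prod.mk_le_mk, ne_eq, Prod.mk.injEq, ← Nat.cast_ite, Nat.cast_le,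
      Nat.cast_inj]
    split_ifs <;> omega

lemma ones_mem_Icc_of_forall_not_strictlyDom {val : ℕ → ℝ × ℝ} (hval : IsGapFront n k val)
    (hkn : 2 * k ≤ n) {x : Individual n}
    (hx : ∀ y : Individual n, ¬ strictlyDom (val (ones y)) (val (ones x)))
    (h0 : ones x ≠ 0) (hn : ones x ≠ n) : ones x ∈ Icc k (n - k) := by
  by_contra hmid
  obtain ⟨y, hy⟩ := exists_ones_eq (show k ≤ n by omega)
  refine hx y (strictlyDom_iff.mpr (hval.lt_of_notMem _ (ones_le x) ?_ _ ?_))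
  · simp [mem_optimalCounts, h0, hn, hmid]
  · rw [hy, mem_Icc]
    omega

end Benchmarks

/-- There exist `C, c > 0` such that for all sufficiently large `n`, the
modified SEMO and modified GSEMO reach a population of at least `n/2` individuals within at
most `C·n²` iterations, with probability at least `1 − exp(−c√n)`: (i) maximizing OMM, from
every initial individual; (ii) maximizing `OJZJ_k` for any integer `1 < k ≤ n/4`, from every
Pareto-optimal initial individual distinct from `0ⁿ` and `1ⁿ`. -/
theorem modified_gsemo_population_growth_omm_ojzj :
    ∃ C c : ℝ, 0 < C ∧ 0 < c ∧ ∃ N₀ : ℕ, ∀ n : ℕ, N₀ ≤ n →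
      (∀ mutOp : Individual n → PMF (Individual n),
        (mutOp = oneBitMut ∨ mutOp = stdBitMut) →
        ∀ x₀ : Individual n,
          1 - ENNReal.ofReal (Real.exp (-(c * Real.sqrt n))) ≤
            prob (run (modStep omm mutOp ones n) {x₀} ⌊C * (n : ℝ) ^ 2⌋₊)
              {l | ∃ Q ∈ l, (n : ℝ) / 2 ≤ (Q.card : ℝ)}) ∧
      (∀ k : ℕ, 1 < k → 4 * k ≤ n →
        ∀ mutOp : Individual n → PMF (Individual n),
          (mutOp = oneBitMut ∨ mutOp = stdBitMut) →
          ∀ x₀ : Individual n,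
            (∀ y : Individual n, ¬ strictlyDom (ojzj n k y) (ojzj n k x₀)) →
            x₀ ≠ (fun _ => false) → x₀ ≠ (fun _ => true) →
            1 - ENNReal.ofReal (Real.exp (-(c * Real.sqrt n))) ≤
              prob (run (modStep (ojzj n k) mutOp ones n) {x₀} ⌊C * (n : ℝ) ^ 2⌋₊)
                {l | ∃ Q ∈ l, (n : ℝ) / 2 ≤ (Q.card : ℝ)}) := by
  refine ⟨256, 1, by norm_num, by norm_num, 16, fun n hn => ⟨fun mutOp hmut x₀ => ?_,
    fun k hk hkn mutOp hmut x₀ hpareto h0 h1 => ?_⟩⟩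
  · rw [one_mul]
    exact one_sub_exp_le_prob_run_modStep hn (by omega) (isGapFront_omm n)
      (inv_le_mutOp_flipOne hmut) (by simpa using ones_le x₀)
  · rw [one_mul, ojzj_eq_comp]
    rw [ojzj_eq_comp] at hpareto
    have hval := isGapFront_ojzjVal (k := k) (n := n) hk.le (by omega)
    exact one_sub_exp_le_prob_run_modStep hn hkn hval (inv_le_mutOp_flipOne hmut)
      (ones_mem_Icc_of_forall_not_strictlyDom hval (by omega) hpareto
        (mt ones_eq_zero_iff.mp h0) (mt ones_eq_iff_eq_true.mp h1))

end GSEMOPaper
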